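/- Touching lemma: let β ≥ 0, let F : ℝ → ℝ be real analytic with F(0) = 0 and F′(0) = −c for some c > 0, let B ∈ ℝ, and let λ ∈ ℝ. Let φ, φ̃ : ℝ → ℝ be continuous, 2π-periodic, with zero mean, twice differentiable if β > 0, and suppose both satisfy the equation F(ψ(x)) + β·ψ″(x) = −(K∗ψ)(x) + B for all x ∈ ℝ (with the same constant B). Assume φ(x) ≥ φ̃(x) for all x ∈ [λ, λ+π] and that φ − φ̃ is odd with respect to λ, i.e., (φ − φ̃)(2λ − x) = −(φ − φ̃)(x) for all x ∈ ℝ. Then either φ = φ̃ on all of ℝ, or φ(x) > φ̃(x) for all x ∈ (λ, λ+π). -/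

import Mathlib

open Real MeasureTheory Filter

/-- The 2π-periodic kernel of `D⁻²`, equal to `(1/(4π))(|x|−π)² − π/12` on `[−π,π]`. -/
noncomputable def Kper (x : ℝ) : ℝ :=
  (1 / (4 * π)) * (|x - 2 * π * ((round (x / (2 * π)) : ℤ) : ℝ)| - π) ^ 2 - π / 12

/-- Periodic convolution with the kernel `Kper`. -/
noncomputable def Kconv (φ : ℝ → ℝ) (x : ℝ) : ℝ :=
  ∫ y in (-π)..π, Kper (x - y) * φ y

/-!
If the order is not strict, `w = φ - φt ≥ 0` vanishes at some `x₀ ∈ (λ, λ + π)`, a local minimum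
of `w`. There the `F` terms of the two equations cancel and `β w''(x₀) ≥ 0`, so `(K∗w)(x₀) ≤ 0`.
Folding the convolution with the oddness of `w` about `λ` gives
`(K∗w)(x₀) = ∫_λ^{λ+π} G(x₀ - λ, y - λ) w(y) dy` with
`G(a, s) = K(a - s) - K(a + s) = min(a, s) (π - max(a, s)) / π`, the Dirichlet Green's function
of `-d²/dx²` on `[0, π]`, which is positive inside the square. Hence `w = 0` on the half-period,
and then everywhere by oddness and periodicity.
-/

open Set Topology

lemma Kper_eq_norm (x : ℝ) :
    Kper x = (1 / (4 * π)) * (‖(x : AddCircle (2 * π))‖ - π) ^ 2 - π / 12 := by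
  rw [Kper, AddCircle.norm_eq, mul_comm _ (2 * π), ← div_eq_inv_mul]

@[fun_prop]
lemma continuous_Kper : Continuous Kper := by
  have h : Continuous fun x : ℝ => ‖(x : AddCircle (2 * π))‖ :=
    continuous_norm.comp (AddCircle.continuous_mk' (2 * π))
  simp_rw [funext Kper_eq_norm]
  fun_prop

lemma Kper_periodic : Function.Periodic Kper (2 * π) := by
  intro x
  simp only [Kper_eq_norm, AddCircle.coe_add_period]

lemma Kper_eq_of_abs_le {x : ℝ} (hx : |x| ≤ π) :
    Kper x = (1 / (4 * π)) * (|x| - π) ^ 2 - π / 12 := by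
  rw [Kper_eq_norm, (AddCircle.norm_coe_eq_abs_iff (2 * π) two_pi_pos.ne').2]
  rwa [abs_of_pos two_pi_pos, mul_div_cancel_left₀ _ two_ne_zero]

lemma Kper_sub_sub_Kper_add {a s : ℝ} (ha : a ∈ Icc 0 π) (hs : s ∈ Icc 0 π) :
    Kper (a - s) - Kper (a + s) = min a s * (π - max a s) / π := by
  obtain ⟨ha₀, haπ⟩ := ha
  obtain ⟨hs₀, hsπ⟩ := hs
  have hdiff : Kper (a - s) = (1 / (4 * π)) * (|a - s| - π) ^ 2 - π / 12 :=
    Kper_eq_of_abs_le (abs_sub_le_iff.2 ⟨by linarith, by linarith⟩)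
  have hsum : Kper (a + s) = (1 / (4 * π)) * (a + s - π) ^ 2 - π / 12 := by
    rcases le_total (a + s) π with h | h
    · rw [Kper_eq_of_abs_le (by rwa [abs_of_nonneg (by linarith)]), abs_of_nonneg (by linarith)]
    · rw [← Kper_periodic.sub_eq, Kper_eq_of_abs_le (abs_le.2 ⟨by linarith, by linarith⟩),
        abs_of_nonpos (by linarith)]
      ring
  rw [hdiff, hsum]
  rcases le_total a s with h | h
  · rw [min_eq_left h, max_eq_right h, abs_of_nonpos (by linarith)]
    field_simp
    ring
  · rw [min_eq_right h, max_eq_left h, abs_of_nonneg (by linarith)]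
    field_simp
    ring

lemma Kper_reflect_eq {l x y : ℝ} (hx : x ∈ Icc l (l + π)) (hy : y ∈ Icc l (l + π)) :
    Kper (x - y) - Kper (x - 2 * l + y) = min (x - l) (y - l) * (π - max (x - l) (y - l)) / π := by
  rw [← Kper_sub_sub_Kper_add ⟨sub_nonneg.2 hx.1, by linarith [hx.2]⟩
    ⟨sub_nonneg.2 hy.1, by linarith [hy.2]⟩]
  ring_nf

lemma Kper_reflect_nonneg {l x y : ℝ} (hx : x ∈ Icc l (l + π)) (hy : y ∈ Icc l (l + π)) :
    0 ≤ Kper (x - y) - Kper (x - 2 * l + y) := by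
  rw [Kper_reflect_eq hx hy]
  exact div_nonneg (mul_nonneg (le_min (sub_nonneg.2 hx.1) (sub_nonneg.2 hy.1))
    (sub_nonneg.2 (max_le (by linarith [hx.2]) (by linarith [hy.2])))) pi_pos.le

lemma Kper_reflect_pos {l x y : ℝ} (hx : x ∈ Ioo l (l + π)) (hy : y ∈ Ioo l (l + π)) :
    0 < Kper (x - y) - Kper (x - 2 * l + y) := by
  rw [Kper_reflect_eq (Ioo_subset_Icc_self hx) (Ioo_subset_Icc_self hy)]
  exact div_pos (mul_pos (lt_min (sub_pos.2 hx.1) (sub_pos.2 hy.1))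
    (sub_pos.2 (max_lt (by linarith [hx.2]) (by linarith [hy.2])))) pi_pos

lemma Kconv_sub {φ ψ : ℝ → ℝ} (hφ : Continuous φ) (hψ : Continuous ψ) (x : ℝ) :
    Kconv φ x - Kconv ψ x = Kconv (φ - ψ) x := by
  rw [Kconv, Kconv, ← intervalIntegral.integral_sub
    (Continuous.intervalIntegrable (by fun_prop) _ _)
    (Continuous.intervalIntegrable (by fun_prop) _ _)]
  simp only [Kconv, Pi.sub_apply, mul_sub]

lemma Kconv_eq_integral_of_odd {w : ℝ → ℝ} {l : ℝ} (hw : Continuous w)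
    (hper : Function.Periodic w (2 * π)) (hodd : ∀ x, w (2 * l - x) = -w x) (x : ℝ) :
    Kconv w x = ∫ y in l..l + π, (Kper (x - y) - Kper (x - 2 * l + y)) * w y := by
  have hint : ∀ (f : ℝ → ℝ) a b, Continuous f →
      IntervalIntegrable (fun y => Kper (f y) * w y) volume a b :=
    fun f a b hf => Continuous.intervalIntegrable (by fun_prop) a b
  have hperiodic : Function.Periodic (fun y => Kper (x - y) * w y) (2 * π) := fun y => by
    simp only [← sub_sub, Kper_periodic.sub_eq, hper y]
  have hreflect : ∫ y in l - π..l, Kper (x - y) * w y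
      = -∫ y in l..l + π, Kper (x - 2 * l + y) * w y := by
    rw [← intervalIntegral.integral_neg]
    convert (intervalIntegral.integral_comp_sub_left (fun y => Kper (x - y) * w y) (2 * l)
      (a := l) (b := l + π)).symm using 1
    · congr 1 <;> ring
    · refine intervalIntegral.integral_congr fun y _ => ?_
      simp only [hodd, show x - (2 * l - y) = x - 2 * l + y by ring]
      ring
  calc Kconv w x = ∫ y in l - π..l + π, Kper (x - y) * w y := by
        rw [Kconv]
        convert hperiodic.intervalIntegral_add_eq (-π) (l - π) using 2 <;> ring
    _ = (∫ y in l - π..l, Kper (x - y) * w y) + ∫ y in l..l + π, Kper (x - y) * w y :=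
        (intervalIntegral.integral_add_adjacent_intervals
          (hint _ _ _ (by fun_prop)) (hint _ _ _ (by fun_prop))).symm
    _ = _ := by
        simp_rw [hreflect, sub_mul]
        rw [intervalIntegral.integral_sub (hint _ _ _ (by fun_prop)) (hint _ _ _ (by fun_prop))]
        ring

theorem IsLocalMin.deriv_deriv_nonneg {f : ℝ → ℝ} {x₀ : ℝ} (h : IsLocalMin f x₀)
    (hc : ContinuousAt f x₀) : 0 ≤ deriv (deriv f) x₀ := by
  by_contra! hneg
  have hmax := isLocalMax_of_deriv_deriv_neg hneg h.deriv_eq_zero hc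
  have hconst : f =ᶠ[𝓝 x₀] fun _ => f x₀ :=
    (h.and hmax).mono fun _ hy => le_antisymm hy.2 hy.1
  have hzero : deriv (deriv f) x₀ = 0 := by
    rw [hconst.deriv.deriv_eq]
    simp
  exact hneg.ne hzero

lemma deriv_deriv_le_of_isLocalMin_sub {f g : ℝ → ℝ} {x₀ : ℝ} (hf : Differentiable ℝ f)
    (hg : Differentiable ℝ g) (hf' : DifferentiableAt ℝ (deriv f) x₀)
    (hg' : DifferentiableAt ℝ (deriv g) x₀) (h : IsLocalMin (f - g) x₀) :
    deriv (deriv g) x₀ ≤ deriv (deriv f) x₀ := by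
  have hsub : deriv (f - g) = deriv f - deriv g := funext fun x => deriv_sub (hf x) (hg x)
  have := h.deriv_deriv_nonneg (hf.sub hg).continuous.continuousAt
  rwa [hsub, deriv_sub hf' hg', sub_nonneg] at this

lemma mul_deriv_deriv_sub_nonneg_of_isLocalMin {β x₀ : ℝ} {f g : ℝ → ℝ} (hβ : 0 ≤ β)
    (hf : 0 < β → Differentiable ℝ f ∧ Differentiable ℝ (deriv f))
    (hg : 0 < β → Differentiable ℝ g ∧ Differentiable ℝ (deriv g))
    (h : IsLocalMin (f - g) x₀) : 0 ≤ β * (deriv (deriv f) x₀ - deriv (deriv g) x₀) := by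
  rcases hβ.eq_or_lt with rfl | hβ_pos
  · simp
  obtain ⟨hf₁, hf₂⟩ := hf hβ_pos
  obtain ⟨hg₁, hg₂⟩ := hg hβ_pos
  exact mul_nonneg hβ <| sub_nonneg.2 <|
    deriv_deriv_le_of_isLocalMin_sub hf₁ hg₁ (hf₂ x₀) (hg₂ x₀) h

lemma eqOn_zero_of_integral_mul_nonpos {g w : ℝ → ℝ} {a b : ℝ} (hab : a < b)
    (hg : ContinuousOn g (Icc a b)) (hw : ContinuousOn w (Icc a b))
    (hg_nonneg : ∀ y ∈ Icc a b, 0 ≤ g y) (hg_pos : ∀ y ∈ Ioo a b, 0 < g y)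
    (hw_nonneg : ∀ y ∈ Icc a b, 0 ≤ w y) (hint : ∫ y in a..b, g y * w y ≤ 0) :
    EqOn w 0 (Ioo a b) := by
  intro y hy
  by_contra hne
  have hpos : 0 < w y := (hw_nonneg y (Ioo_subset_Icc_self hy)).lt_of_ne' hne
  refine hint.not_gt (intervalIntegral.integral_pos hab (hg.mul hw) (fun z hz => ?_)
    ⟨y, Ioo_subset_Icc_self hy, mul_pos (hg_pos y hy) hpos⟩)
  exact mul_nonneg (hg_nonneg z (Ioc_subset_Icc_self hz)) (hw_nonneg z (Ioc_subset_Icc_self hz))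

lemma Function.Periodic.eq_zero_of_odd_of_eqOn_Ioo {w : ℝ → ℝ} {l p : ℝ}
    (hper : Function.Periodic w (2 * p)) (hp : 0 < p) (hw : Continuous w)
    (hodd : ∀ x, w (2 * l - x) = -w x) (hzero : EqOn w 0 (Ioo l (l + p))) : w = 0 := by
  have hIcc : EqOn w 0 (Icc l (l + p)) := by
    rw [← closure_Ioo (by linarith : l ≠ l + p)]
    exact hzero.closure hw continuous_const
  funext x
  obtain ⟨y, hy, hxy⟩ := hper.exists_mem_Ico (by linarith) x (l - p)
  rw [hxy]
  rcases le_total l y with h | h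
  · exact hIcc ⟨h, by linarith [hy.2]⟩
  · have := hIcc (x := 2 * l - y) ⟨by linarith, by linarith [hy.1]⟩
    simpa [hodd] using this

theorem touching_lemma_general (β : ℝ) (hβ : 0 ≤ β) (F : ℝ → ℝ)
    (B l : ℝ) (φ φt : ℝ → ℝ)
    (hφc : Continuous φ) (hφtc : Continuous φt)
    (hφp : Function.Periodic φ (2 * π)) (hφtp : Function.Periodic φt (2 * π))
    (hφd : 0 < β → Differentiable ℝ φ ∧ Differentiable ℝ (deriv φ))
    (hφtd : 0 < β → Differentiable ℝ φt ∧ Differentiable ℝ (deriv φt))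
    (heq : ∀ x, F (φ x) + β * deriv (deriv φ) x = -(Kconv φ x) + B)
    (heqt : ∀ x, F (φt x) + β * deriv (deriv φt) x = -(Kconv φt x) + B)
    (hge : ∀ x ∈ Set.Icc l (l + π), φt x ≤ φ x)
    (hodd : ∀ x, φ (2 * l - x) - φt (2 * l - x) = -(φ x - φt x)) :
    (∀ x, φ x = φt x) ∨ ∀ x ∈ Set.Ioo l (l + π), φt x < φ x := by
  refine or_iff_not_imp_right.2 fun hnot => ?_
  push Not at hnot
  obtain ⟨x₀, hx₀, hle⟩ := hnot
  have hw_nonneg : ∀ x ∈ Icc l (l + π), 0 ≤ (φ - φt) x := fun x hx => sub_nonneg.2 (hge x hx)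
  have htouch : φ x₀ = φt x₀ := hle.antisymm (hge x₀ (Ioo_subset_Icc_self hx₀))
  have hmin : IsLocalMin (φ - φt) x₀ :=
    Filter.mem_of_superset (Ioo_mem_nhds hx₀.1 hx₀.2) fun x hx => by
      simpa [htouch] using hw_nonneg x (Ioo_subset_Icc_self hx)
  have hβ_term := mul_deriv_deriv_sub_nonneg_of_isLocalMin hβ hφd hφtd hmin
  have hconv : Kconv (φ - φt) x₀ ≤ 0 := by
    rw [← Kconv_sub hφc hφtc]
    linarith [heq x₀, heqt x₀, congrArg F htouch]
  rw [Kconv_eq_integral_of_odd (hφc.sub hφtc) (hφp.sub hφtp) hodd] at hconv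
  have hzero : EqOn (φ - φt) 0 (Ioo l (l + π)) :=
    eqOn_zero_of_integral_mul_nonpos (by linarith [pi_pos]) (by fun_prop) (by fun_prop)
      (fun y hy => Kper_reflect_nonneg (Ioo_subset_Icc_self hx₀) hy)
      (fun y hy => Kper_reflect_pos hx₀ hy) hw_nonneg hconv
  intro x
  exact sub_eq_zero.1 <| congrFun ((hφp.sub hφtp).eq_zero_of_odd_of_eqOn_Ioo pi_pos
    (hφc.sub hφtc) hodd hzero) x

/-- Touching lemma: if two periodic solutions of `F(ψ) + βψ″ = −K∗ψ + B` are ordered on a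
half-period and their difference is odd about `λ`, then either they coincide or the order
is strict on the open half-period. -/
theorem touching_lemma (β : ℝ) (hβ : 0 ≤ β) (F : ℝ → ℝ) (c : ℝ) (hc : 0 < c)
    (hF : ∀ x, AnalyticAt ℝ F x) (hF0 : F 0 = 0) (hF1 : deriv F 0 = -c)
    (B l : ℝ) (φ φt : ℝ → ℝ)
    (hφc : Continuous φ) (hφtc : Continuous φt)
    (hφp : Function.Periodic φ (2 * π)) (hφtp : Function.Periodic φt (2 * π))
    (hφ0 : (∫ y in (-π)..π, φ y) = 0) (hφt0 : (∫ y in (-π)..π, φt y) = 0)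
    (hφd : 0 < β → Differentiable ℝ φ ∧ Differentiable ℝ (deriv φ))
    (hφtd : 0 < β → Differentiable ℝ φt ∧ Differentiable ℝ (deriv φt))
    (heq : ∀ x, F (φ x) + β * deriv (deriv φ) x = -(Kconv φ x) + B)
    (heqt : ∀ x, F (φt x) + β * deriv (deriv φt) x = -(Kconv φt x) + B)
    (hge : ∀ x ∈ Set.Icc l (l + π), φt x ≤ φ x)
    (hodd : ∀ x, φ (2 * l - x) - φt (2 * l - x) = -(φ x - φt x)) :
    (∀ x, φ x = φt x) ∨ ∀ x ∈ Set.Ioo l (l + π), φt x < φ x :=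
  touching_lemma_general β hβ F B l φ φt hφc hφtc hφp hφtp hφd hφtd heq heqt hge hodd
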